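/- arXiv:2206.03929 — 7 statements merged into one kernel-verified Lean document; each statement's English description precedes it below -/
import Mathlib

section
/- Let H = (V, E) be an r-uniform hypergraph with r ≥ 2, let F ∈ ℝ^{V×V} be a symmetric matrix with diagonal f such that the bordered matrix M(F) = [[1, fᵀ],[f, F]] is positive semidefinite, and suppose that for every x ∈ V and every clique C of H containing x with |C| ≥ r, one has ∑_{y ∈ C \ {x}} F(x,y) ≤ (r−2)·F(x,x). Then for every clique C of H with |C| ≥ r, f(C) = ∑_{x∈C} f(x) ≤ r − 1. -/
/-!
Testing the positive semidefinite bordered matrix `M(F)` against the vector `(-f(C), 𝟙_C)` gives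
`f(C)² ≤ ∑_{x,y ∈ C} F(x,y)`, while summing the link condition over `x ∈ C` bounds the right-hand
side by `(r - 1) f(C)`. Hence `f(C)² ≤ (r - 1) f(C)`, which forces `f(C) ≤ r - 1`.
-/

/-- The bordered matrix `M(F) = [[1, fᵀ],[f, F]]`, where `f = diag F`. -/
def borderM {V : Type*} (F : Matrix V V ℝ) : Matrix (Option V) (Option V) ℝ :=
  Matrix.of fun i j =>
    match i, j with
    | none, none => 1
    | none, some y => F y y
    | some x, none => F x x
    | some x, some y => F x y

open Finset Matrix

theorem borderM_submatrix {V W : Type*} (F : Matrix V V ℝ) (e : W → V) :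
    (borderM F).submatrix (Option.map e) (Option.map e) = borderM (F.submatrix e e) := by
  ext (_ | i) (_ | j) <;> rfl

theorem sq_trace_le_sum_of_posSemidef_borderM {W : Type*} [Fintype W] {G : Matrix W W ℝ}
    (hG : (borderM G).PosSemidef) : G.trace ^ 2 ≤ ∑ i, ∑ j, G i j := by
  have h := hG.dotProduct_mulVec_nonneg fun i => i.elim (-G.trace) fun _ => 1
  simp only [dotProduct, mulVec, Fintype.sum_option, borderM, of_apply, Option.elim,
    star_trivial, mul_one, one_mul, sum_add_distrib, ← sum_mul] at h
  simp only [trace, diag_apply] at h ⊢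
  linarith

theorem sq_sum_diag_le_sum_sum_of_posSemidef_borderM {V : Type*} {F : Matrix V V ℝ}
    (hF : (borderM F).PosSemidef) (C : Finset V) :
    (∑ x ∈ C, F x x) ^ 2 ≤ ∑ x ∈ C, ∑ y ∈ C, F x y := by
  have hC := hF.submatrix (Option.map ((↑) : C → V))
  rw [borderM_submatrix] at hC
  convert sq_trace_le_sum_of_posSemidef_borderM hC using 1
  · exact congrArg (· ^ 2) (sum_coe_sort C fun x => F x x).symm
  · rw [← sum_coe_sort C]
    exact sum_congr rfl fun x _ => (sum_coe_sort C (F x)).symm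

theorem sum_sum_le_of_sum_erase_le {V : Type*} [DecidableEq V] (F : V → V → ℝ) (C : Finset V)
    (c : ℝ) (h : ∀ x ∈ C, ∑ y ∈ C.erase x, F x y ≤ c * F x x) :
    ∑ x ∈ C, ∑ y ∈ C, F x y ≤ (c + 1) * ∑ x ∈ C, F x x := by
  rw [mul_sum]
  refine sum_le_sum fun x hx => ?_
  rw [← add_sum_erase C _ hx]
  linarith [h x hx]

theorem le_of_sq_le_mul {a x : ℝ} (ha : 0 ≤ a) (h : x ^ 2 ≤ a * x) : x ≤ a := by
  nlinarith

theorem clique_inequality_of_link_condition_general {V : Type*} [DecidableEq V]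
    (r : ℕ) (hr : 2 ≤ r) (E : Finset (Finset V))
    (F : Matrix V V ℝ)
    (hPSD : (borderM F).PosSemidef)
    (hrow : ∀ x : V, ∀ C : Finset V, (∀ S ⊆ C, S.card = r → S ∈ E) →
      x ∈ C → r ≤ C.card → ∑ y ∈ C.erase x, F x y ≤ ((r : ℝ) - 2) * F x x) :
    ∀ C : Finset V, (∀ S ⊆ C, S.card = r → S ∈ E) → r ≤ C.card →
      ∑ x ∈ C, F x x ≤ (r : ℝ) - 1 := by
  intro C hC hcard
  have hsq := sq_sum_diag_le_sum_sum_of_posSemidef_borderM hPSD C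
  have hlink : ∑ x ∈ C, ∑ y ∈ C, F x y ≤ ((r : ℝ) - 1) * ∑ x ∈ C, F x x := by
    have := sum_sum_le_of_sum_erase_le F C _ fun x hx => hrow x C hC hx hcard
    rwa [show (r : ℝ) - 2 + 1 = r - 1 by ring] at this
  have hr1 : (0 : ℝ) ≤ r - 1 := by
    have : (2 : ℝ) ≤ r := by exact_mod_cast hr
    linarith
  exact le_of_sq_le_mul hr1 (hsq.trans hlink)

/-- If `H = (V,E)` is an `r`-uniform hypergraph with `r ≥ 2`,
`F` is a symmetric matrix whose bordered matrix is positive semidefinite, and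
for every `x` and every clique `C ∋ x` with `|C| ≥ r` one has
`∑_{y ∈ C \ {x}} F(x,y) ≤ (r-2) F(x,x)`, then every clique `C` with `|C| ≥ r`
satisfies `∑_{x ∈ C} F(x,x) ≤ r - 1`. -/
theorem clique_inequality_of_link_condition {V : Type*} [Fintype V] [DecidableEq V]
    (r : ℕ) (hr : 2 ≤ r) (E : Finset (Finset V)) (hE : ∀ e ∈ E, e.card = r)
    (F : Matrix V V ℝ) (hFsym : F.IsSymm)
    (hPSD : (borderM F).PosSemidef)
    (hrow : ∀ x : V, ∀ C : Finset V, (∀ S ⊆ C, S.card = r → S ∈ E) →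
      x ∈ C → r ≤ C.card → ∑ y ∈ C.erase x, F x y ≤ ((r : ℝ) - 2) * F x x) :
    ∀ C : Finset V, (∀ S ⊆ C, S.card = r → S ∈ E) → r ≤ C.card →
      ∑ x ∈ C, F x x ≤ (r : ℝ) - 1 :=
  clique_inequality_of_link_condition_general r hr E F hPSD hrow
end

section
/- Let G be a d-regular graph on n vertices (d ≥ 1) with adjacency matrix A and smallest eigenvalue λ. Then every independent set I of G satisfies |I| ≤ (−λ)/(d − λ) · n. -/
/-!
Test the Rayleigh bound on `x = n • 1_I - |I| • 1`, the indicator of `I` made orthogonal to the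
all-ones eigenvector (eigenvalue `d`). The Rayleigh bound
`λ ‖x‖² ≤ xᵀ A x`, together with `1_Iᵀ A 1_I = 0` (independence) and `A 1 = d 1` (regularity),
reads `λ n |I| (n - |I|) ≤ -n |I|² d`, which rearranges to `|I| (d - λ) ≤ -λ n`. Any edge `uw`
gives `λ ≤ -1` through the test vector `e_u - e_w`, so `d - λ > 0`.
-/

open Matrix

namespace Matrix

variable {n : Type*} [Fintype n] [DecidableEq n] {A : Matrix n n ℝ} {lam : ℝ}

theorem IsHermitian.posSemidef_sub_smul_one (hA : A.IsHermitian)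
    (hmin : ∀ (μ : ℝ) (v : n → ℝ), v ≠ 0 → A *ᵥ v = μ • v → lam ≤ μ) :
    (A - lam • (1 : Matrix n n ℝ)).PosSemidef := by
  have hB : (A - lam • (1 : Matrix n n ℝ)).IsHermitian :=
    hA.sub (isHermitian_one.smul (IsSelfAdjoint.all lam))
  refine hB.posSemidef_iff_eigenvalues_nonneg.mpr fun i => ?_
  set b := ⇑(hB.eigenvectorBasis i)
  have hb : b ≠ 0 := by
    simpa [b] using hB.eigenvectorBasis.orthonormal.ne_zero i
  have hAb : A *ᵥ b = (hB.eigenvalues i + lam) • b := by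
    have := hB.mulVec_eigenvectorBasis i
    rw [sub_mulVec, smul_mulVec, one_mulVec, sub_eq_iff_eq_add] at this
    rw [this, add_smul]
  simpa using hmin _ _ hb hAb

theorem IsHermitian.mul_dotProduct_self_le_dotProduct_mulVec (hA : A.IsHermitian)
    (hmin : ∀ (μ : ℝ) (v : n → ℝ), v ≠ 0 → A *ᵥ v = μ • v → lam ≤ μ) (x : n → ℝ) :
    lam * (x ⬝ᵥ x) ≤ x ⬝ᵥ (A *ᵥ x) := by
  have := (hA.posSemidef_sub_smul_one hmin).re_dotProduct_nonneg x
  simp only [star_trivial, RCLike.re_to_real, sub_mulVec, smul_mulVec, one_mulVec, dotProduct_sub,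
    dotProduct_smul, smul_eq_mul] at this
  linarith

end Matrix

namespace SimpleGraph

variable {V : Type*} [Fintype V] {G : SimpleGraph V} [DecidableRel G.Adj]

theorem dotProduct_adjMatrix_mulVec_single_sub_single [DecidableEq V] {u w : V} (h : G.Adj u w) :
    (Pi.single u 1 - Pi.single w 1 : V → ℝ) ⬝ᵥ
      (G.adjMatrix ℝ *ᵥ (Pi.single u 1 - Pi.single w 1)) = -2 := by
  simp [mulVec_sub, sub_dotProduct, adjMatrix_apply, h, h.symm]
  norm_num

theorem le_neg_one_of_adj [DecidableEq V] {lam : ℝ}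
    (hmin : ∀ (μ : ℝ) (v : V → ℝ), v ≠ 0 → G.adjMatrix ℝ *ᵥ v = μ • v → lam ≤ μ)
    {u w : V} (h : G.Adj u w) : lam ≤ -1 := by
  have hx : (Pi.single u 1 - Pi.single w 1 : V → ℝ) ⬝ᵥ (Pi.single u 1 - Pi.single w 1) = 2 := by
    simp [G.ne_of_adj h, (G.ne_of_adj h).symm]
    norm_num
  have := (isHermitian_adjMatrix ℝ G).mul_dotProduct_self_le_dotProduct_mulVec hmin
    (Pi.single u 1 - Pi.single w 1)
  rw [hx, dotProduct_adjMatrix_mulVec_single_sub_single h] at this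
  linarith

theorem IsRegularOfDegree.adjMatrix_mulVec_const {d : ℕ} (hreg : G.IsRegularOfDegree d) (c : ℝ) :
    G.adjMatrix ℝ *ᵥ Function.const V c = Function.const V (d * c) := by
  ext v
  simp [hreg v]

theorem IsRegularOfDegree.const_vecMul_adjMatrix {d : ℕ} (hreg : G.IsRegularOfDegree d) (c : ℝ) :
    Function.const V c ᵥ* G.adjMatrix ℝ = Function.const V (d * c) := by
  rw [← mulVec_transpose, transpose_adjMatrix, hreg.adjMatrix_mulVec_const]

theorem IsIndepSet.dotProduct_adjMatrix_mulVec_indicator [DecidableEq V] {s : Finset V}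
    (hs : G.IsIndepSet s) :
    (fun v => if v ∈ s then (1 : ℝ) else 0) ⬝ᵥ
      (G.adjMatrix ℝ *ᵥ fun v => if v ∈ s then (1 : ℝ) else 0) = 0 := by
  rw [dotProduct_mulVec_adjMatrix]
  refine Finset.sum_eq_zero fun i _ => Finset.sum_eq_zero fun j _ => ?_
  by_cases hi : i ∈ s <;> by_cases hj : j ∈ s <;> simp [hi, hj]
  exact fun hadj => hs hi hj (G.ne_of_adj hadj) hadj

/-- `n • 1_s - |s| • 1`: the indicator of `s` scaled by `n` and shifted to be orthogonal to
the all-ones vector. -/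
def hoffmanVector [DecidableEq V] (s : Finset V) : V → ℝ :=
  (Fintype.card V : ℝ) • (fun v => if v ∈ s then 1 else 0) - Function.const V (s.card : ℝ)

theorem dotProduct_self_hoffmanVector [DecidableEq V] (s : Finset V) :
    hoffmanVector s ⬝ᵥ hoffmanVector s =
      Fintype.card V * s.card * (Fintype.card V - s.card) := by
  simp only [hoffmanVector, sub_dotProduct, dotProduct_sub, smul_dotProduct, dotProduct_smul]
  simp [dotProduct, Finset.sum_ite_mem]
  ring

theorem IsRegularOfDegree.dotProduct_adjMatrix_mulVec_hoffmanVector [DecidableEq V] {d : ℕ}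
    (hreg : G.IsRegularOfDegree d) {s : Finset V} (hs : G.IsIndepSet s) :
    hoffmanVector s ⬝ᵥ (G.adjMatrix ℝ *ᵥ hoffmanVector s) =
      -(Fintype.card V * s.card ^ 2 * d) := by
  simp only [hoffmanVector, mulVec_sub, mulVec_smul, hreg.adjMatrix_mulVec_const, sub_dotProduct,
    dotProduct_sub, smul_dotProduct, dotProduct_smul, hs.dotProduct_adjMatrix_mulVec_indicator]
  rw [dotProduct_mulVec, hreg.const_vecMul_adjMatrix]
  simp [dotProduct, Finset.sum_ite_mem]
  ring

end SimpleGraph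

theorem hoffman_bound_general {V : Type*} [Fintype V] [DecidableEq V]
    (G : SimpleGraph V) [DecidableRel G.Adj]
    (d : ℕ) (hd : 1 ≤ d) (hreg : G.IsRegularOfDegree d) (lam : ℝ)
    (hmin : ∀ (μ : ℝ) (v : V → ℝ), v ≠ 0 →
      (G.adjMatrix ℝ).mulVec v = μ • v → lam ≤ μ)
    (I : Finset V) (hI : ∀ x ∈ I, ∀ y ∈ I, ¬ G.Adj x y) :
    (I.card : ℝ) ≤ (-lam) / ((d : ℝ) - lam) * (Fintype.card V : ℝ) := by
  rcases isEmpty_or_nonempty V with hV | ⟨⟨u⟩⟩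
  · simp [Finset.eq_empty_of_isEmpty I]
  obtain ⟨w, huw⟩ := G.degree_pos_iff_exists_adj u |>.mp (hreg u ▸ hd)
  have hlam : lam ≤ -1 := SimpleGraph.le_neg_one_of_adj hmin huw
  have hrayleigh := (SimpleGraph.isHermitian_adjMatrix ℝ G).mul_dotProduct_self_le_dotProduct_mulVec
    hmin (SimpleGraph.hoffmanVector I)
  rw [SimpleGraph.dotProduct_self_hoffmanVector,
    hreg.dotProduct_adjMatrix_mulVec_hoffmanVector fun x hx y hy _ => hI x hx y hy] at hrayleigh
  have hn : (0 : ℝ) < Fintype.card V := by exact_mod_cast Fintype.card_pos_iff.mpr ⟨u⟩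
  rw [div_mul_eq_mul_div, le_div_iff₀ (by linarith)]
  rcases (Nat.cast_nonneg (α := ℝ) I.card).eq_or_lt with hk | hk
  · rw [← hk]; nlinarith
  · nlinarith [mul_pos hn hk]

/-- Hoffman bound: If `G` is a `d`-regular graph on `n`
vertices (`d ≥ 1`) whose adjacency matrix has smallest eigenvalue `λ`, then
every independent set `I` of `G` satisfies `|I| ≤ (-λ)/(d - λ) · n`. -/
theorem hoffman_bound {V : Type*} [Fintype V] [DecidableEq V]
    (G : SimpleGraph V) [DecidableRel G.Adj]
    (d : ℕ) (hd : 1 ≤ d) (hreg : G.IsRegularOfDegree d) (lam : ℝ)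
    (heig : ∃ v : V → ℝ, v ≠ 0 ∧ (G.adjMatrix ℝ).mulVec v = lam • v)
    (hmin : ∀ (μ : ℝ) (v : V → ℝ), v ≠ 0 →
      (G.adjMatrix ℝ).mulVec v = μ • v → lam ≤ μ)
    (I : Finset V) (hI : ∀ x ∈ I, ∀ y ∈ I, ¬ G.Adj x y) :
    (I.card : ℝ) ≤ (-lam) / ((d : ℝ) - lam) * (Fintype.card V : ℝ) :=
  hoffman_bound_general G d hd hreg lam hmin I hI
end

section
/- Let A₀ be the identity, and let A₁, A₂ ∈ ℝ^{V×V} with V the set of 2-subsets of [n] (n ≥ 4), where A_k(x,y) = 1 if |x ∩ y| = 2 − k and 0 otherwise. Then the matrix A = A₀ + (1/2)A₁ + ((n−2)/(2(n−3)))A₂ is positive semidefinite, and ⟨J, A⟩/|V| = n²/4, where J is the all-ones matrix. -/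
/-!
Let `N` be the incidence matrix of the 2-subsets of an `n`-set against its points. Its Gram matrix
`Nᵀ N = (n - 2) I + J` is invertible, so `P = I - N (Nᵀ N)⁻¹ Nᵀ` is the orthogonal projection onto
`ker Nᵀ`: it is positive semidefinite, and it kills the all-ones vector, which is `N 1 / 2`.
Since `(N Nᵀ) x y = |x ∩ y|`, comparing entries gives
`A = (n - 2) / (2 (n - 3)) • P + n / (2 (n - 1)) • J`, a nonnegative combination of positive
semidefinite matrices for `n ≥ 4`, whose row sums are `n / (2 (n - 1)) * (n choose 2) = n² / 4`.
-/

open Matrix Finset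

namespace Matrix

section Projection

variable {R : Type*} [Ring R] [StarRing R] {m k : Type*} [Fintype m] [DecidableEq m] [Fintype k]
  [DecidableEq k]

theorem one_sub_mul_mul_conjTranspose_mul {N : Matrix m k R} {K : Matrix k k R}
    (h : K * (Nᴴ * N) = 1) : (1 - N * K * Nᴴ) * N = 0 := by
  rw [Matrix.sub_mul, Matrix.one_mul, Matrix.mul_assoc, Matrix.mul_assoc, h, Matrix.mul_one,
    sub_self]

variable [PartialOrder R] [StarOrderedRing R]

theorem posSemidef_one_sub_mul_mul_conjTranspose {N : Matrix m k R} {K : Matrix k k R}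
    (hK : K.IsHermitian) (h : K * (Nᴴ * N) = 1) : (1 - N * K * Nᴴ).PosSemidef := by
  set P := 1 - N * K * Nᴴ
  have hP : Pᴴ = P := by
    simp only [P, conjTranspose_sub, conjTranspose_one, conjTranspose_mul,
      conjTranspose_conjTranspose, hK.eq, Matrix.mul_assoc]
  have hPP : P * P = P := by
    rw [Matrix.mul_sub, Matrix.mul_one, ← Matrix.mul_assoc, ← Matrix.mul_assoc,
      one_sub_mul_mul_conjTranspose_mul h, Matrix.zero_mul, Matrix.zero_mul, sub_zero]
  have := posSemidef_conjTranspose_mul_self P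
  rwa [hP, hPP] at this

end Projection

section AllOnes

variable {ι : Type*} [Fintype ι]

theorem posSemidef_of_one {R : Type*} [CommRing R] [PartialOrder R] [StarRing R]
    [StarOrderedRing R] : (of 1 : Matrix ι ι R).PosSemidef := by
  convert posSemidef_vecMulVec_self_star (1 : ι → R) using 1
  ext i j
  simp [vecMulVec]

variable {K : Type*} [Field K]

theorem of_one_mul_of_one : (of 1 : Matrix ι ι K) * of 1 = (Fintype.card ι : K) • of 1 := by
  ext i j
  simp [mul_apply]

theorem inv_smul_one_sub_mul_smul_one_add_of_one [DecidableEq ι] {a : K} (ha : a ≠ 0)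
    (ha' : a + Fintype.card ι ≠ 0) :
    (a⁻¹ • (1 - (a + Fintype.card ι)⁻¹ • of 1 : Matrix ι ι K)) * (a • 1 + of 1) = 1 := by
  simp only [Matrix.smul_mul, Matrix.sub_mul, Matrix.mul_add, Matrix.one_mul, Matrix.mul_smul,
    Matrix.mul_one, of_one_mul_of_one, smul_smul]
  match_scalars <;> field_simp; ring

end AllOnes

end Matrix

section SubsetIncidence

variable {α : Type*} [DecidableEq α]

def subsetIncidence (α : Type*) [DecidableEq α] (k : ℕ) :
    Matrix {x : Finset α // x.card = k} α ℝ :=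
  of fun x i => if i ∈ x.1 then 1 else 0

theorem card_inter_eq_iff_eq {k : ℕ} {x y : {x : Finset α // x.card = k}} :
    #(x.1 ∩ y.1) = k ↔ x = y := by
  refine ⟨fun h ↦ Subtype.ext ?_, fun h ↦ by simp [h, y.2]⟩
  rw [← eq_of_subset_of_card_le inter_subset_left (h.trans x.2.symm).ge,
    eq_of_subset_of_card_le inter_subset_right (h.trans y.2.symm).ge]

variable [Fintype α]

theorem subsetIncidence_mul_conjTranspose_apply {k : ℕ} (x y : {x : Finset α // x.card = k}) :
    (subsetIncidence α k * (subsetIncidence α k)ᴴ) x y = #(x.1 ∩ y.1) := by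
  simp only [subsetIncidence, mul_apply, conjTranspose_apply, of_apply, star_trivial, mul_boole,
    ← ite_and, sum_boole]
  congr 2
  ext i
  simp [and_comm]

theorem sum_subsetIncidence_apply {k : ℕ} (x : {x : Finset α // x.card = k}) :
    ∑ i, subsetIncidence α k x i = k := by
  simp [subsetIncidence, x.2]

theorem subsetIncidence_mul_of_one_mul_conjTranspose (k : ℕ) :
    subsetIncidence α k * (of 1 : Matrix α α ℝ) * (subsetIncidence α k)ᴴ =
      ((k : ℝ) ^ 2) • of 1 := by
  ext x y
  simp [mul_apply, sum_subsetIncidence_apply, ← Finset.mul_sum, sq]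

theorem card_filter_mem_two_subsets (i : α) :
    #{x : {x : Finset α // x.card = 2} | i ∈ x.1} = Fintype.card α - 1 := by
  rw [← card_univ, ← card_erase_of_mem (mem_univ i)]
  symm
  refine card_bij (fun j hj ↦ ⟨{i, j}, card_pair (ne_of_mem_erase hj).symm⟩) ?_ ?_ ?_
  · simp
  · intro a ha b hb hab
    have : b ∈ ({i, a} : Finset α) := by rw [Subtype.mk.inj hab]; simp
    simpa [ne_of_mem_erase hb, eq_comm] using this
  · intro x hx
    have hi : i ∈ x.1 := (mem_filter.1 hx).2
    obtain ⟨j, hj⟩ := card_eq_one.1 (by rw [card_erase_of_mem hi, x.2] : #(x.1.erase i) = 1)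
    have hjx : j ∈ x.1.erase i := hj ▸ mem_singleton_self j
    refine ⟨j, mem_erase.2 ⟨ne_of_mem_erase hjx, mem_univ j⟩, Subtype.ext ?_⟩
    change insert i {j} = x.1
    rw [← hj, insert_erase hi]

theorem filter_mem_mem_two_subsets {i j : α} (hij : i ≠ j) :
    ({x : {x : Finset α // x.card = 2} | i ∈ x.1 ∧ j ∈ x.1} : Finset _) =
      {⟨{i, j}, card_pair hij⟩} := by
  refine eq_singleton_iff_unique_mem.2 ⟨by simp, fun x hx ↦ Subtype.ext ?_⟩
  obtain ⟨hi, hj⟩ := (mem_filter.1 hx).2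
  exact (eq_of_subset_of_card_le (insert_subset hi (singleton_subset_iff.2 hj))
    (by rw [x.2, card_pair hij])).symm

theorem conjTranspose_subsetIncidence_two_mul_self :
    (subsetIncidence α 2)ᴴ * subsetIncidence α 2 = ((Fintype.card α : ℝ) - 2) • 1 + of 1 := by
  ext i j
  simp only [subsetIncidence, mul_apply, conjTranspose_apply, of_apply, star_trivial, mul_boole,
    ← ite_and, sum_boole, Matrix.add_apply, Matrix.smul_apply, one_apply, Pi.one_apply]
  rcases eq_or_ne i j with rfl | hij
  · have : 1 ≤ Fintype.card α := Fintype.card_pos_iff.2 ⟨i⟩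
    simp [card_filter_mem_two_subsets, Nat.cast_sub this]
    ring
  · simp [filter_mem_mem_two_subsets hij.symm, hij]

end SubsetIncidence

section PairProjection

variable {α : Type*} [Fintype α] [DecidableEq α]

noncomputable def pairGramInv (α : Type*) [Fintype α] [DecidableEq α] : Matrix α α ℝ :=
  ((Fintype.card α : ℝ) - 2)⁻¹ • (1 - ((Fintype.card α : ℝ) - 2 + Fintype.card α)⁻¹ • of 1)

theorem pairGramInv_isHermitian : (pairGramInv α).IsHermitian := by
  ext i j
  simp [pairGramInv, one_apply, eq_comm]

theorem pairGramInv_mul_conjTranspose_mul_self (hα : 3 ≤ Fintype.card α) :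
    pairGramInv α * ((subsetIncidence α 2)ᴴ * subsetIncidence α 2) = 1 := by
  have hα' : (3 : ℝ) ≤ Fintype.card α := by exact_mod_cast hα
  rw [conjTranspose_subsetIncidence_two_mul_self]
  exact inv_smul_one_sub_mul_smul_one_add_of_one (by linarith) (by linarith)

/-- The orthogonal projection onto the kernel of `(subsetIncidence α 2)ᴴ`. -/
noncomputable def pairProjection (α : Type*) [Fintype α] [DecidableEq α] :
    Matrix {x : Finset α // x.card = 2} {x : Finset α // x.card = 2} ℝ :=
  1 - subsetIncidence α 2 * pairGramInv α * (subsetIncidence α 2)ᴴ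

theorem pairProjection_posSemidef (hα : 3 ≤ Fintype.card α) : (pairProjection α).PosSemidef :=
  posSemidef_one_sub_mul_mul_conjTranspose pairGramInv_isHermitian (pairGramInv_mul_conjTranspose_mul_self hα)

theorem pairProjection_mul_subsetIncidence (hα : 3 ≤ Fintype.card α) :
    pairProjection α * subsetIncidence α 2 = 0 :=
  one_sub_mul_mul_conjTranspose_mul (pairGramInv_mul_conjTranspose_mul_self hα)

theorem sum_pairProjection_apply (hα : 3 ≤ Fintype.card α) (x : {x : Finset α // x.card = 2}) :
    ∑ y, pairProjection α x y = 0 := by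
  have hN : subsetIncidence α 2 *ᵥ 1 = (2 : ℝ) • 1 := by
    ext y
    simp [mulVec, dotProduct, sum_subsetIncidence_apply]
  have h := congrArg (· *ᵥ 1) (pairProjection_mul_subsetIncidence hα)
  simp only [← mulVec_mulVec, hN, mulVec_smul, zero_mulVec] at h
  simpa [mulVec, dotProduct] using congrFun h x

theorem pairProjection_apply (x y : {x : Finset α // x.card = 2}) :
    pairProjection α x y = (if x = y then 1 else 0) -
      ((Fintype.card α : ℝ) - 2)⁻¹ * (#(x.1 ∩ y.1) - 2 / (Fintype.card α - 1)) := by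
  have h : ((Fintype.card α : ℝ) - 2 + Fintype.card α)⁻¹ * 2 ^ 2 =
      2 / (Fintype.card α - 1) := by
    rw [show (Fintype.card α : ℝ) - 2 + Fintype.card α = 2 * (Fintype.card α - 1) by ring,
      mul_inv]
    ring
  simp only [pairProjection, pairGramInv, Matrix.mul_smul, Matrix.smul_mul, Matrix.mul_sub,
    Matrix.sub_mul, Matrix.mul_one, subsetIncidence_mul_of_one_mul_conjTranspose, smul_smul,
    Matrix.sub_apply, Matrix.smul_apply, one_apply, of_apply,
    subsetIncidence_mul_conjTranspose_apply, Pi.one_apply, smul_eq_mul]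
  linear_combination ((Fintype.card α : ℝ) - 2)⁻¹ * h

theorem eq_smul_pairProjection_add_smul_of_one (hα : 4 ≤ Fintype.card α)
    {A : Matrix {x : Finset α // x.card = 2} {x : Finset α // x.card = 2} ℝ}
    (hA : ∀ x y, A x y =
      if (x.1 ∩ y.1).card = 2 then 1
      else if (x.1 ∩ y.1).card = 1 then 1 / 2
      else ((Fintype.card α : ℝ) - 2) / (2 * ((Fintype.card α : ℝ) - 3))) :
    A = (((Fintype.card α : ℝ) - 2) / (2 * ((Fintype.card α : ℝ) - 3))) • pairProjection α +
      ((Fintype.card α : ℝ) / (2 * ((Fintype.card α : ℝ) - 1))) • of 1 := by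
  ext x y
  have hα' : (4 : ℝ) ≤ Fintype.card α := by exact_mod_cast hα
  have h1 : (Fintype.card α : ℝ) - 1 ≠ 0 := by linarith
  have h2 : (Fintype.card α : ℝ) - 2 ≠ 0 := by linarith
  have h3 : (Fintype.card α : ℝ) - 3 ≠ 0 := by linarith
  have hle : #(x.1 ∩ y.1) ≤ 2 := (card_le_card inter_subset_left).trans_eq x.2
  have hxy : x = y ↔ #(x.1 ∩ y.1) = 2 := card_inter_eq_iff_eq.symm
  rw [hA, Matrix.add_apply, Matrix.smul_apply, Matrix.smul_apply, pairProjection_apply, of_apply,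
    Pi.one_apply, smul_eq_mul, smul_eq_mul]
  obtain h | h | h : #(x.1 ∩ y.1) = 2 ∨ #(x.1 ∩ y.1) = 1 ∨ #(x.1 ∩ y.1) = 0 := by omega
  all_goals
    simp only [hxy, h]
    norm_num
    field_simp
    ring

end PairProjection

/-- For `n ≥ 4`, with `V` the set of 2-subsets of `[n]`, the
matrix `A = A₀ + (1/2)A₁ + ((n-2)/(2(n-3)))A₂` of the Johnson scheme
`J(n,2)` (where `A_k(x,y) = 1` iff `|x ∩ y| = 2 - k`) is positive
semidefinite, and `⟨J, A⟩/|V| = n²/4`. -/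
theorem johnson_scheme_matrix_posSemidef (n : ℕ) (hn : 4 ≤ n)
    (A : Matrix {x : Finset (Fin n) // x.card = 2}
        {x : Finset (Fin n) // x.card = 2} ℝ)
    (hA : ∀ x y, A x y =
      if (x.1 ∩ y.1).card = 2 then 1
      else if (x.1 ∩ y.1).card = 1 then 1 / 2
      else ((n : ℝ) - 2) / (2 * ((n : ℝ) - 3))) :
    A.PosSemidef ∧
      (∑ x, ∑ y, A x y) /
          (Fintype.card {x : Finset (Fin n) // x.card = 2} : ℝ) =
        (n : ℝ) ^ 2 / 4 := by
  have hn' : (4 : ℝ) ≤ n := by exact_mod_cast hn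
  have hcard : 3 ≤ Fintype.card (Fin n) := by simp; omega
  have hAeq := eq_smul_pairProjection_add_smul_of_one (A := A) (by simpa using hn)
    (by simpa only [Fintype.card_fin] using hA)
  rw [Fintype.card_fin] at hAeq
  refine ⟨?_, ?_⟩
  · rw [hAeq]
    exact ((pairProjection_posSemidef hcard).smul (by bound)).add (posSemidef_of_one.smul (by bound))
  · have hrow : ∀ x, ∑ y, A x y =
        Fintype.card {x : Finset (Fin n) // x.card = 2} * (n / (2 * (n - 1))) := by
      intro x
      simp [hAeq, sum_add_distrib, ← mul_sum, sum_pairProjection_apply hcard]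
    rw [sum_congr rfl fun x _ ↦ hrow x, sum_const, card_univ, nsmul_eq_mul,
      Fintype.card_finset_len, Fintype.card_fin, Nat.cast_choose_two]
    have : (n : ℝ) - 1 ≠ 0 := by linarith
    field_simp
    ring
end

section
/- In the Hamming cube ℍⁿ = {0,1}ⁿ with Hamming distance d, there exist three distinct points pairwise at distance s (an s-triangle) if and only if s is even and 0 < s ≤ ⌊2n/3⌋. -/
open Finset

lemma hd_decide (n : ℕ) (p q : ℕ → Prop) [DecidablePred p] [DecidablePred q] :
    hammingDist (fun i : Fin n => decide (p i.val)) (fun i : Fin n => decide (q i.val)) =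
    ((Finset.range n).filter fun i => ¬(p i ↔ q i)).card := by
  rw [hammingDist, Finset.card_filter, Finset.card_filter, ← Fin.sum_univ_eq_sum_range]
  refine Finset.sum_congr rfl fun i _ => ?_
  refine if_congr ?_ rfl rfl
  simp [Ne, decide_eq_decide]

lemma tri_sum (n : ℕ) (x y z : Fin n → Bool) :
    ∃ m, hammingDist x y + hammingDist x z + hammingDist y z = 2 * m ∧ m ≤ n := by
  have key : ∀ a b c : Bool,
      ((if a ≠ b then 1 else 0) + (if a ≠ c then 1 else 0) + (if b ≠ c then 1 else 0) : ℕ)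
        = 2 * (if ¬(a = b ∧ a = c) then 1 else 0) := by decide
  refine ⟨∑ i, (if ¬(x i = y i ∧ x i = z i) then 1 else 0), ?_, ?_⟩
  · rw [hammingDist, hammingDist, hammingDist, Finset.card_filter, Finset.card_filter,
      Finset.card_filter, ← Finset.sum_add_distrib, ← Finset.sum_add_distrib,
      Finset.mul_sum]
    exact Finset.sum_congr rfl fun i _ => key _ _ _
  · calc (∑ i, (if ¬(x i = y i ∧ x i = z i) then 1 else 0) : ℕ)
        ≤ ∑ _i : Fin n, 1 := Finset.sum_le_sum fun i _ => by split <;> simp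
    _ = n := by simp

/-- In the Hamming cube `{0,1}ⁿ` there exist three distinct
points pairwise at Hamming distance `s` (an `s`-triangle) if and only if
`s` is even and `0 < s ≤ ⌊2n/3⌋`. -/
theorem exists_s_triangle_iff (n s : ℕ) :
    (∃ x y z : Fin n → Bool, x ≠ y ∧ x ≠ z ∧ y ≠ z ∧
      hammingDist x y = s ∧ hammingDist x z = s ∧ hammingDist y z = s) ↔
    (Even s ∧ 0 < s ∧ s ≤ 2 * n / 3) := by
  constructor
  · rintro ⟨x, y, z, hxy, hxz, hyz, d1, d2, d3⟩
    obtain ⟨m, hm, hmn⟩ := tri_sum n x y z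
    rw [d1, d2, d3] at hm
    have hs0 : s ≠ 0 := fun h => hxy (hammingDist_eq_zero.mp (by rw [d1, h]))
    refine ⟨⟨m - s, by omega⟩, by omega, ?_⟩
    rw [Nat.le_div_iff_mul_le (by norm_num)]
    omega
  · rintro ⟨⟨t, ht⟩, hpos, hle⟩
    have h3t : 3 * t ≤ n := by
      have := (Nat.le_div_iff_mul_le (by norm_num : 0 < 3)).mp hle
      omega
    have ht0 : 0 < t := by omega
    have d1 : hammingDist (fun i : Fin n => decide False)
        (fun i : Fin n => decide (i.val < 2 * t)) = s := by
      rw [show (fun i : Fin n => decide False) =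
            (fun i : Fin n => decide ((fun _ : ℕ => False) i.val)) from rfl,
        hd_decide n (fun _ => False) (fun i => i < 2 * t)]
      have : ((Finset.range n).filter fun i => ¬(False ↔ i < 2 * t)) = Finset.range (2 * t) := by
        ext a; simp only [Finset.mem_filter, Finset.mem_range]
        constructor
        · rintro ⟨_, h⟩; tauto
        · intro h; exact ⟨by omega, by tauto⟩
      rw [this, Finset.card_range]; omega
    have d2 : hammingDist (fun i : Fin n => decide False)
        (fun i : Fin n => decide (t ≤ i.val ∧ i.val < 3 * t)) = s := by
      rw [show (fun i : Fin n => decide False) =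
            (fun i : Fin n => decide ((fun _ : ℕ => False) i.val)) from rfl,
        hd_decide n (fun _ => False) (fun i => t ≤ i ∧ i < 3 * t)]
      have : ((Finset.range n).filter fun i => ¬(False ↔ t ≤ i ∧ i < 3 * t))
          = Finset.Ico t (3 * t) := by
        ext a; simp only [Finset.mem_filter, Finset.mem_range, Finset.mem_Ico]
        constructor
        · rintro ⟨_, h⟩; tauto
        · intro h; exact ⟨by omega, by tauto⟩
      rw [this, Nat.card_Ico]; omega
    have d3 : hammingDist (fun i : Fin n => decide (i.val < 2 * t))
        (fun i : Fin n => decide (t ≤ i.val ∧ i.val < 3 * t)) = s := by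
      rw [hd_decide n (fun i => i < 2 * t) (fun i => t ≤ i ∧ i < 3 * t)]
      have : ((Finset.range n).filter fun i => ¬(i < 2 * t ↔ t ≤ i ∧ i < 3 * t))
          = Finset.range t ∪ Finset.Ico (2 * t) (3 * t) := by
        ext a
        simp only [Finset.mem_filter, Finset.mem_range, Finset.mem_union, Finset.mem_Ico]
        constructor
        · rintro ⟨ha, h⟩
          by_cases h1 : a < 2 * t <;> [left; right] <;> omega
        · intro h
          refine ⟨by omega, fun hiff => ?_⟩
          rcases h with h | h
          · have := hiff.mp (by omega); omega
          · have := hiff.mpr (by omega); omega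
      rw [this, Finset.card_union_of_disjoint, Finset.card_range, Nat.card_Ico]
      · omega
      · rw [Finset.disjoint_left]
        intro a ha hb
        simp only [Finset.mem_range] at ha
        simp only [Finset.mem_Ico] at hb
        omega
    have hs0 : s ≠ 0 := by omega
    exact ⟨_, _, _,
      fun h => hs0 (by rw [← d1, h, hammingDist_self]),
      fun h => hs0 (by rw [← d2, h, hammingDist_self]),
      fun h => hs0 (by rw [← d3, h, hammingDist_self]),
      d1, d2, d3⟩
end

section
/- For the normalized Krawtchouk polynomials K^n_k(t) = C(n,k)⁻¹ ∑_{i=0}^{k} (−1)^i C(t,i) C(n−t, k−i), the matrices E_k on ℍⁿ × ℍⁿ defined by E_k(x,y) = K^n_k(d(x,y)) satisfy the orthogonality relations ⟨E_k, E_l⟩ = 0 (trace inner product) for all k ≠ l, 0 ≤ k, l ≤ n. -/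
/-- The normalized Krawtchouk polynomial
`K^n_k(t) = C(n,k)⁻¹ ∑_{i=0}^{k} (-1)^i C(t,i) C(n-t, k-i)`,
evaluated at a natural number `t`. -/
noncomputable def krawtchouk (n k t : ℕ) : ℝ :=
  ((n.choose k : ℝ))⁻¹ *
    ∑ i ∈ Finset.range (k + 1),
      (-1 : ℝ) ^ i * (t.choose i : ℝ) * ((n - t).choose (k - i) : ℝ)

open Finset

namespace KrawAux

noncomputable def chi (n : ℕ) (S : Finset (Fin n)) (x : Fin n → Bool) : ℝ :=
  ∏ i ∈ S, (if x i then (-1:ℝ) else 1)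

lemma chi_mul (n : ℕ) (S : Finset (Fin n)) (x y : Fin n → Bool) :
    chi n S x * chi n S y
      = (-1:ℝ) ^ (S ∩ (Finset.univ.filter fun i => x i ≠ y i)).card := by
  classical
  rw [chi, chi, ← Finset.prod_mul_distrib]
  have h1 : ∀ i ∈ S, (if x i then (-1:ℝ) else 1) * (if y i then (-1:ℝ) else 1)
      = if x i ≠ y i then (-1:ℝ) else 1 := by
    intro i _
    cases hx : x i <;> cases hy : y i <;> simp [hx, hy]
  rw [Finset.prod_congr rfl h1, Finset.prod_ite, Finset.prod_const, Finset.prod_const,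
    one_pow, mul_one]
  congr 2
  ext i; simp

lemma count_lemma (n k : ℕ) (D : Finset (Fin n)) :
    ∑ S ∈ Finset.univ.powersetCard k, (-1:ℝ) ^ (S ∩ D).card
      = ∑ i ∈ Finset.range (k+1),
          (-1:ℝ)^i * (D.card.choose i : ℝ) * ((n - D.card).choose (k-i) : ℝ) := by
  classical
  have hcompl : Dᶜ.card = n - D.card := by simp [Finset.card_compl]
  have hR : ∀ i ∈ Finset.range (k+1),
      (-1:ℝ)^i * (D.card.choose i : ℝ) * ((n - D.card).choose (k-i) : ℝ)
        = ∑ p ∈ (D.powersetCard i) ×ˢ (Dᶜ.powersetCard (k-i)), (-1:ℝ)^i := by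
    intro i _
    rw [Finset.sum_const, Finset.card_product, Finset.card_powersetCard,
      Finset.card_powersetCard, hcompl, nsmul_eq_mul]
    push_cast; ring
  rw [Finset.sum_congr rfl hR, Finset.sum_sigma']
  refine (Finset.sum_nbij' (i := fun S => (⟨(S ∩ D).card, (S ∩ D, S \ D)⟩ :
      Σ i : ℕ, Finset (Fin n) × Finset (Fin n)))
    (j := fun p => p.2.1 ∪ p.2.2) ?_ ?_ ?_ ?_ ?_)
  · intro S hS
    rw [Finset.mem_powersetCard] at hS
    have h1 : (S ∩ D).card ≤ k := by
      calc (S ∩ D).card ≤ S.card := Finset.card_le_card Finset.inter_subset_left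
        _ = k := hS.2
    have h2 : (S \ D).card = k - (S ∩ D).card := by
      have h3 := Finset.card_sdiff_add_card_inter S D
      omega
    refine Finset.mem_sigma.2 ⟨Finset.mem_range.2 (Nat.lt_succ_of_le h1),
      Finset.mem_product.2 ⟨?_, ?_⟩⟩
    · exact Finset.mem_powersetCard.2 ⟨Finset.inter_subset_right, rfl⟩
    · refine Finset.mem_powersetCard.2 ⟨fun a ha => ?_, h2⟩
      rw [Finset.mem_sdiff] at ha
      simpa [Finset.mem_compl] using ha.2
  · intro p hp
    simp only [Finset.mem_sigma, Finset.mem_range, Finset.mem_product,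
      Finset.mem_powersetCard] at hp ⊢
    obtain ⟨hi, ⟨hA, hAc⟩, hB, hBc⟩ := hp
    constructor
    · exact Finset.subset_univ _
    · rw [Finset.card_union_of_disjoint, hAc, hBc]
      · omega
      · exact Finset.disjoint_left.2 fun a haA haB => by
          have := hB haB; simp [Finset.mem_compl] at this; exact this (hA haA)
  · intro S hS
    simp only [Finset.mem_powersetCard] at hS
    ext a
    simp only [Finset.mem_union, Finset.mem_inter, Finset.mem_sdiff]
    tauto
  · rintro ⟨i, A, B⟩ hp
    simp only [Finset.mem_sigma, Finset.mem_range, Finset.mem_product,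
      Finset.mem_powersetCard] at hp
    obtain ⟨hi, ⟨hA, hAc⟩, hB, hBc⟩ := hp
    have hBD : Disjoint B D := by
      refine Finset.disjoint_left.2 fun a haB haD => ?_
      have := hB haB; simp only [Finset.mem_compl] at this; exact this haD
    have h1 : (A ∪ B) ∩ D = A := by
      rw [Finset.union_inter_distrib_right, Finset.inter_eq_left.2 hA,
        Finset.disjoint_iff_inter_eq_empty.1 hBD, Finset.union_empty]
    have h2 : (A ∪ B) \ D = B := by
      rw [Finset.union_sdiff_distrib, Finset.sdiff_eq_empty_iff_subset.2 hA,
        Finset.sdiff_eq_self_of_disjoint hBD, Finset.empty_union]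
    simp only [h1, h2, hAc]
  · intro S hS
    rfl

lemma kraw_expand (n k : ℕ) (x y : Fin n → Bool) :
    ∑ S ∈ Finset.univ.powersetCard k, chi n S x * chi n S y
      = ∑ i ∈ Finset.range (k+1), (-1:ℝ)^i * ((hammingDist x y).choose i : ℝ) *
          ((n - hammingDist x y).choose (k-i) : ℝ) := by
  classical
  have hd : (Finset.univ.filter fun i => x i ≠ y i).card = hammingDist x y := by
    simp [hammingDist]
  calc ∑ S ∈ Finset.univ.powersetCard k, chi n S x * chi n S y
      = ∑ S ∈ Finset.univ.powersetCard k,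
          (-1:ℝ)^(S ∩ (Finset.univ.filter fun i => x i ≠ y i)).card :=
        Finset.sum_congr rfl fun S _ => chi_mul n S x y
    _ = _ := by rw [count_lemma, hd]

lemma sum_chi_zero (n : ℕ) (U : Finset (Fin n)) (hU : U.Nonempty) :
    ∑ x : Fin n → Bool, ∏ i ∈ U, (if x i then (-1:ℝ) else 1) = 0 := by
  classical
  obtain ⟨i0, hi0⟩ := hU
  apply Finset.sum_ninvolution (g := fun x => Function.update x i0 (!(x i0)))
  · intro x
    have hU' : U = insert i0 (U.erase i0) := (Finset.insert_erase hi0).symm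
    rw [hU', Finset.prod_insert (Finset.notMem_erase _ _),
      Finset.prod_insert (Finset.notMem_erase _ _)]
    have h1 : ∀ j ∈ U.erase i0,
        (if Function.update x i0 (!(x i0)) j then (-1:ℝ) else 1)
          = (if x j then (-1:ℝ) else 1) := by
      intro j hj
      rw [Function.update_of_ne (Finset.ne_of_mem_erase hj)]
    rw [Finset.prod_congr rfl h1, Function.update_self]
    cases hx : x i0 <;> simp [hx]
  · intro x _ h
    have h2 := congrFun h i0
    rw [Function.update_self] at h2
    simp at h2
  · intro x; exact Finset.mem_univ _
  · intro x
    funext j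
    by_cases hj : j = i0
    · subst hj; simp
    · simp [Function.update_of_ne hj]

lemma chi_orth (n : ℕ) {S T : Finset (Fin n)} (hST : S ≠ T) :
    ∑ x : Fin n → Bool, chi n S x * chi n T x = 0 := by
  classical
  have hprod : ∀ x : Fin n → Bool, chi n S x * chi n T x
      = ∏ i ∈ (S \ T) ∪ (T \ S), (if x i then (-1:ℝ) else 1) := by
    intro x
    set f : Fin n → ℝ := fun i => if x i then (-1:ℝ) else 1 with hf
    have hsq : (∏ i ∈ S ∩ T, f i) * (∏ i ∈ S ∩ T, f i) = 1 := by
      rw [← Finset.prod_mul_distrib]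
      have : ∀ i ∈ S ∩ T, f i * f i = 1 := by
        intro i _; by_cases h : x i <;> simp [hf, h]
      rw [Finset.prod_congr rfl this, Finset.prod_const_one]
    rw [chi, chi, ← Finset.prod_inter_mul_prod_diff S T f,
      ← Finset.prod_inter_mul_prod_diff T S f, Finset.inter_comm T S,
      Finset.prod_union disjoint_sdiff_sdiff]
    calc ((∏ i ∈ S ∩ T, f i) * ∏ i ∈ S \ T, f i) *
          ((∏ i ∈ S ∩ T, f i) * ∏ i ∈ T \ S, f i)
        = ((∏ i ∈ S ∩ T, f i) * (∏ i ∈ S ∩ T, f i)) *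
            ((∏ i ∈ S \ T, f i) * ∏ i ∈ T \ S, f i) := by ring
      _ = (∏ i ∈ S \ T, f i) * ∏ i ∈ T \ S, f i := by rw [hsq, one_mul]
  have hUne : ((S \ T) ∪ (T \ S)).Nonempty := by
    rcases Finset.eq_empty_or_nonempty ((S \ T) ∪ (T \ S)) with h | h
    · exfalso
      rw [Finset.union_eq_empty] at h
      exact hST (Finset.Subset.antisymm (Finset.sdiff_eq_empty_iff_subset.1 h.1)
        (Finset.sdiff_eq_empty_iff_subset.1 h.2))
    · exact h
  simp_rw [hprod]
  exact sum_chi_zero n _ hUne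

end KrawAux

open KrawAux

/-- The matrices `E_k(x,y) = K^n_k(d(x,y))` on the Hamming
cube satisfy the orthogonality relations `⟨E_k, E_l⟩ = 0` for `k ≠ l`,
`0 ≤ k, l ≤ n`. -/
theorem krawtchouk_matrices_orthogonal (n : ℕ) :
    ∀ k l : ℕ, k ≤ n → l ≤ n → k ≠ l →
      ∑ x : Fin n → Bool, ∑ y : Fin n → Bool,
        krawtchouk n k (hammingDist x y) * krawtchouk n l (hammingDist x y) = 0 := by
  intro k l hk hl hkl
  classical
  have hterm : ∀ x y : Fin n → Bool,
      krawtchouk n k (hammingDist x y) * krawtchouk n l (hammingDist x y)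
        = ((n.choose k : ℝ))⁻¹ * ((n.choose l : ℝ))⁻¹ *
          ∑ S ∈ Finset.univ.powersetCard k, ∑ T ∈ Finset.univ.powersetCard l,
            (chi n S x * chi n T x) * (chi n S y * chi n T y) := by
    intro x y
    rw [krawtchouk, krawtchouk, ← kraw_expand, ← kraw_expand, mul_mul_mul_comm,
      Finset.sum_mul_sum]
    congr 1
    refine Finset.sum_congr rfl fun S _ => Finset.sum_congr rfl fun T _ => ?_
    ring
  have hz : ∑ x : Fin n → Bool, ∑ y : Fin n → Bool,
      ∑ S ∈ Finset.univ.powersetCard k, ∑ T ∈ Finset.univ.powersetCard l,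
        (chi n S x * chi n T x) * (chi n S y * chi n T y) = 0 := by
    have hzero : ∀ S ∈ (Finset.univ : Finset (Fin n)).powersetCard k,
        ∀ T ∈ (Finset.univ : Finset (Fin n)).powersetCard l,
        (∑ x : Fin n → Bool, chi n S x * chi n T x) = 0 := by
      intro S hS T hT
      refine chi_orth n fun hST => ?_
      rw [Finset.mem_powersetCard] at hS hT
      exact hkl (by rw [← hS.2, ← hT.2, hST])
    calc ∑ x : Fin n → Bool, ∑ y : Fin n → Bool,
          ∑ S ∈ Finset.univ.powersetCard k, ∑ T ∈ Finset.univ.powersetCard l,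
            (chi n S x * chi n T x) * (chi n S y * chi n T y)
        = ∑ x : Fin n → Bool, ∑ S ∈ Finset.univ.powersetCard k,
            ∑ y : Fin n → Bool, ∑ T ∈ Finset.univ.powersetCard l,
            (chi n S x * chi n T x) * (chi n S y * chi n T y) :=
          Finset.sum_congr rfl fun x _ => Finset.sum_comm
      _ = ∑ S ∈ Finset.univ.powersetCard k, ∑ x : Fin n → Bool,
            ∑ y : Fin n → Bool, ∑ T ∈ Finset.univ.powersetCard l,
            (chi n S x * chi n T x) * (chi n S y * chi n T y) := Finset.sum_comm
      _ = ∑ S ∈ Finset.univ.powersetCard k, ∑ x : Fin n → Bool,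
            ∑ T ∈ Finset.univ.powersetCard l, ∑ y : Fin n → Bool,
            (chi n S x * chi n T x) * (chi n S y * chi n T y) :=
          Finset.sum_congr rfl fun S _ => Finset.sum_congr rfl fun x _ => Finset.sum_comm
      _ = ∑ S ∈ Finset.univ.powersetCard k, ∑ T ∈ Finset.univ.powersetCard l,
            ∑ x : Fin n → Bool, ∑ y : Fin n → Bool,
            (chi n S x * chi n T x) * (chi n S y * chi n T y) :=
          Finset.sum_congr rfl fun S _ => Finset.sum_comm
      _ = ∑ S ∈ Finset.univ.powersetCard k, ∑ T ∈ Finset.univ.powersetCard l,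
            (∑ x : Fin n → Bool, chi n S x * chi n T x) *
              (∑ y : Fin n → Bool, chi n S y * chi n T y) :=
          Finset.sum_congr rfl fun S _ => Finset.sum_congr rfl fun T _ =>
            (Finset.sum_mul_sum _ _ _ _).symm
      _ = 0 := by
          refine Finset.sum_eq_zero fun S hS => Finset.sum_eq_zero fun T hT => ?_
          rw [hzero S hS T hT, zero_mul]
  simp_rw [hterm, ← Finset.mul_sum]
  rw [hz, mul_zero]
end

section
/- Let I be a countable index set, and for each i ∈ I let a_i ∈ ℝⁿ and β_i ∈ ℝ. Suppose S = { x ∈ ℝⁿ₊ : a_iᵀ x ≤ β_i for all i ∈ I } is nonempty and compact. Then there exists a finite subset I₀ ⊆ I such that { x ∈ ℝⁿ₊ : a_iᵀ x ≤ β_i for all i ∈ I₀ } is compact. -/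
/-- If `I` is countable, `a_i ∈ ℝⁿ`, `β_i ∈ ℝ`, and
`S = {x ≥ 0 : a_iᵀx ≤ β_i ∀i}` is nonempty and compact, then some finite
subfamily of the inequalities already defines a compact set. -/
theorem exists_finite_subfamily_compact {n : ℕ} {I : Type*} [Countable I]
    (a : I → (Fin n → ℝ)) (β : I → ℝ)
    (hne : ({x : Fin n → ℝ | (∀ j, 0 ≤ x j) ∧
      ∀ i, ∑ j, a i j * x j ≤ β i}).Nonempty)
    (hcomp : IsCompact {x : Fin n → ℝ | (∀ j, 0 ≤ x j) ∧
      ∀ i, ∑ j, a i j * x j ≤ β i}) :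
    ∃ I₀ : Finset I, IsCompact {x : Fin n → ℝ | (∀ j, 0 ≤ x j) ∧
      ∀ i ∈ I₀, ∑ j, a i j * x j ≤ β i} := by
  classical
  obtain ⟨x₀, hx₀pos, hx₀le⟩ := hne
  obtain ⟨C, hC⟩ := isBounded_iff_forall_norm_le.1 hcomp.isBounded
  have hcont : ∀ i : I, Continuous fun x : Fin n → ℝ => ∑ j, a i j * x j :=
    fun i => continuous_finset_sum _ fun j _ => continuous_const.mul (continuous_apply j)
  have hOrth : IsClosed {d : Fin n → ℝ | ∀ j, 0 ≤ d j} := by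
    have h : {d : Fin n → ℝ | ∀ j, 0 ≤ d j} = ⋂ j, {d | 0 ≤ d j} := by ext; simp
    rw [h]
    exact isClosed_iInter fun j => isClosed_le continuous_const (continuous_apply j)
  set E : Set (Fin n → ℝ) := {d | ‖d‖ = 1 ∧ ∀ j, 0 ≤ d j} with hEdef
  have hEcomp : IsCompact E := by
    have h : E = Metric.sphere (0 : Fin n → ℝ) 1 ∩ {d | ∀ j, 0 ≤ d j} := by
      ext d; simp [hEdef, mem_sphere_zero_iff_norm]
    rw [h]
    exact (isCompact_sphere 0 1).inter_right hOrth
  -- Step 1: no recession direction at all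
  have hKey : E ∩ ⋂ (i : I), {d | ∑ j, a i j * d j ≤ 0} = ∅ := by
    rw [Set.eq_empty_iff_forall_notMem]
    rintro d ⟨⟨hd1, hdpos⟩, hdle⟩
    simp only [Set.mem_iInter, Set.mem_setOf_eq] at hdle
    have hCx : ‖x₀‖ ≤ C := hC x₀ ⟨hx₀pos, hx₀le⟩
    set t : ℝ := C + ‖x₀‖ + 1 with htdef
    have ht : 0 ≤ t := by
      have := norm_nonneg x₀
      nlinarith
    have hy : (x₀ + t • d) ∈ {x : Fin n → ℝ | (∀ j, 0 ≤ x j) ∧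
        ∀ i, ∑ j, a i j * x j ≤ β i} := by
      constructor
      · intro j
        have : (x₀ + t • d) j = x₀ j + t * d j := by simp
        rw [this]
        exact add_nonneg (hx₀pos j) (mul_nonneg ht (hdpos j))
      · intro i
        have hsum : ∑ j, a i j * ((x₀ + t • d) j)
            = (∑ j, a i j * x₀ j) + t * ∑ j, a i j * d j := by
          rw [Finset.mul_sum, ← Finset.sum_add_distrib]
          exact Finset.sum_congr rfl fun j _ => by simp; ring
        rw [hsum]
        have h1 : t * ∑ j, a i j * d j ≤ 0 := mul_nonpos_of_nonneg_of_nonpos ht (hdle i)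
        have h2 := hx₀le i
        linarith
    have hnorm := hC _ hy
    have h3 : ‖t • d‖ ≤ ‖x₀ + t • d‖ + ‖x₀‖ := by
      calc ‖t • d‖ = ‖x₀ + t • d - x₀‖ := by rw [add_sub_cancel_left]
        _ ≤ ‖x₀ + t • d‖ + ‖x₀‖ := norm_sub_le _ _
    have h4 : ‖t • d‖ = t := by
      rw [norm_smul, hd1, Real.norm_eq_abs, abs_of_nonneg ht, mul_one]
    rw [h4, htdef] at h3
    linarith
  -- Step 2: finitely many inequalities kill all recession directions
  obtain ⟨I₀, hI₀⟩ := hEcomp.elim_finite_subfamily_closed _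
    (fun i : I => isClosed_le (hcont i) continuous_const) hKey
  refine ⟨I₀, ?_⟩
  -- Step 3: uniform positivity ε
  have hKey2 : E ∩ ⋂ (k : ℕ),
      {d | ∀ i ∈ I₀, ∑ j, a i j * d j ≤ 1 / ((k : ℝ) + 1)} = ∅ := by
    rw [Set.eq_empty_iff_forall_notMem] at hI₀ ⊢
    rintro d ⟨hdE, hdk⟩
    refine hI₀ d ⟨hdE, ?_⟩
    simp only [Set.mem_iInter, Set.mem_setOf_eq] at hdk ⊢
    intro i hi
    by_contra h
    push_neg at h
    obtain ⟨k, hk⟩ := exists_nat_one_div_lt h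
    exact absurd (hdk k i hi) (by linarith)
  have hZk : ∀ k : ℕ, IsClosed {d : Fin n → ℝ | ∀ i ∈ I₀,
      ∑ j, a i j * d j ≤ 1 / ((k : ℝ) + 1)} := by
    intro k
    have h : {d : Fin n → ℝ | ∀ i ∈ I₀, ∑ j, a i j * d j ≤ 1 / ((k : ℝ) + 1)}
        = ⋂ i ∈ I₀, {d | ∑ j, a i j * d j ≤ 1 / ((k : ℝ) + 1)} := by
      ext; simp
    rw [h]
    exact isClosed_biInter fun i _ => isClosed_le (hcont i) continuous_const
  obtain ⟨T, hT⟩ := hEcomp.elim_finite_subfamily_closed _ hZk hKey2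
  set N : ℕ := T.sup id with hNdef
  set ε : ℝ := 1 / ((N : ℝ) + 1) with hεdef
  have hεpos : 0 < ε := by positivity
  have hε : ∀ d ∈ E, ∃ i ∈ I₀, ε < ∑ j, a i j * d j := by
    intro d hd
    rw [Set.eq_empty_iff_forall_notMem] at hT
    have hTd := hT d
    simp only [Set.mem_inter_iff, Set.mem_iInter, Set.mem_setOf_eq, not_and,
      not_forall] at hTd
    obtain ⟨k, hkt, i, hi, hgt⟩ := hTd hd
    refine ⟨i, hi, ?_⟩
    have hgt' : 1 / ((k : ℝ) + 1) < ∑ j, a i j * d j := not_le.1 hgt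
    have hkN : (k : ℝ) ≤ (N : ℝ) := Nat.cast_le.2 (Finset.le_sup (f := id) hkt)
    have hle : ε ≤ 1 / ((k : ℝ) + 1) := by
      rw [hεdef]
      apply one_div_le_one_div_of_le
      · positivity
      · linarith
    linarith
  -- bound on β over I₀
  obtain ⟨B, hB⟩ := (I₀.finite_toSet.image β).bddAbove
  have hBle : ∀ i ∈ I₀, β i ≤ B := fun i hi => hB ⟨i, hi, rfl⟩
  -- Step 4: closed + bounded
  rw [Metric.isCompact_iff_isClosed_bounded]
  constructor
  · have h : {x : Fin n → ℝ | (∀ j, 0 ≤ x j) ∧ ∀ i ∈ I₀, ∑ j, a i j * x j ≤ β i}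
        = {x | ∀ j, 0 ≤ x j} ∩ ⋂ i ∈ I₀, {x | ∑ j, a i j * x j ≤ β i} := by
      ext x; simp [Set.mem_iInter]
    rw [h]
    exact hOrth.inter (isClosed_biInter fun i _ => isClosed_le (hcont i) continuous_const)
  · rw [isBounded_iff_forall_norm_le]
    refine ⟨max (B / ε) 0, ?_⟩
    rintro x ⟨hxpos, hxle⟩
    rcases eq_or_ne x 0 with rfl | hx0
    · simp
    · have hxn : 0 < ‖x‖ := norm_pos_iff.2 hx0
      set d : Fin n → ℝ := ‖x‖⁻¹ • x with hddef
      have hdE : d ∈ E := ⟨norm_smul_inv_norm hx0,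
        fun j => mul_nonneg (inv_nonneg.2 (norm_nonneg x)) (hxpos j)⟩
      obtain ⟨i, hi, hgt⟩ := hε d hdE
      have hsum : ∑ j, a i j * d j = ‖x‖⁻¹ * ∑ j, a i j * x j := by
        rw [Finset.mul_sum]
        exact Finset.sum_congr rfl fun j _ => by simp [hddef]; ring
      rw [hsum] at hgt
      have h1 : ‖x‖ * ε < ‖x‖ * (‖x‖⁻¹ * ∑ j, a i j * x j) :=
        mul_lt_mul_of_pos_left hgt hxn
      have h2 : ‖x‖ * (‖x‖⁻¹ * ∑ j, a i j * x j) = ∑ j, a i j * x j := by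
        field_simp
      rw [h2] at h1
      have h3 : ∑ j, a i j * x j ≤ B := le_trans (hxle i hi) (hBle i hi)
      have h4 : ‖x‖ < B / ε := (lt_div_iff₀ hεpos).2 (by linarith [mul_comm ‖x‖ ε])
      exact le_trans h4.le (le_max_left _ _)
end

section
/- Let I be a set, a_i ∈ ℝⁿ, β_i ∈ ℝ for i ∈ I, and suppose S = { x ∈ ℝⁿ₊ : a_iᵀ x ≤ β_i ∀i } is nonempty and compact. Then for every c ∈ ℝⁿ, max{ cᵀx : x ∈ S } equals the infimum of ∑_i y_i β_i over all finitely supported functions y : I → ℝ₊ with ∑_i y_i a_i ≥ c coordinatewise. -/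
lemma fs_sum_add {I : Type*} (y z : I →₀ ℝ) (g : I → ℝ) :
    (y + z).sum (fun i yi => yi * g i)
      = y.sum (fun i yi => yi * g i) + z.sum (fun i yi => yi * g i) :=
  Finsupp.sum_add_index' (fun _ => zero_mul _) (fun i b c => add_mul b c (g i))

lemma fs_sum_smul {I : Type*} (t : ℝ) (y : I →₀ ℝ) (g : I → ℝ) :
    (t • y).sum (fun i yi => yi * g i) = t * y.sum (fun i yi => yi * g i) := by
  rw [Finsupp.sum_smul_index (fun i => zero_mul (g i)), Finsupp.mul_sum]
  exact Finsupp.sum_congr fun i _ => mul_assoc t (y i) (g i)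

lemma fs_sum_single {I : Type*} (i : I) (g : I → ℝ) :
    (Finsupp.single i (1:ℝ)).sum (fun i yi => yi * g i) = g i := by
  rw [Finsupp.sum_single_index (zero_mul (g i)), one_mul]

lemma rec_zero {n : ℕ} {I : Type*} (a : I → (Fin n → ℝ)) (β : I → ℝ)
    (hne : ({x : Fin n → ℝ | (∀ j, 0 ≤ x j) ∧
      ∀ i, ∑ j, a i j * x j ≤ β i}).Nonempty)
    (hcomp : IsCompact {x : Fin n → ℝ | (∀ j, 0 ≤ x j) ∧
      ∀ i, ∑ j, a i j * x j ≤ β i})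
    (x : Fin n → ℝ) (hx0 : ∀ j, 0 ≤ x j) (hxa : ∀ i, ∑ j, a i j * x j ≤ 0) :
    x = 0 := by
  by_contra hx
  obtain ⟨j, hj⟩ : ∃ j, 0 < x j := by
    by_contra h; push_neg at h
    exact hx (funext fun j => le_antisymm (h j) (hx0 j))
  obtain ⟨x₀, hx₀0, hx₀a⟩ := hne
  have hmem : ∀ t : ℝ, 0 ≤ t → (x₀ + t • x) ∈
      {x : Fin n → ℝ | (∀ j, 0 ≤ x j) ∧ ∀ i, ∑ j, a i j * x j ≤ β i} := by
    intro t ht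
    refine ⟨fun j' => by have := hx0 j'; have := hx₀0 j'; simp only [Pi.add_apply,
      Pi.smul_apply, smul_eq_mul]; nlinarith, fun i => ?_⟩
    have hsplit : ∑ j', a i j' * (x₀ + t • x) j'
        = (∑ j', a i j' * x₀ j') + t * ∑ j', a i j' * x j' := by
      rw [Finset.mul_sum, ← Finset.sum_add_distrib]
      exact Finset.sum_congr rfl fun j' _ => by simp [Pi.add_apply]; ring
    rw [hsplit]
    nlinarith [hx₀a i, hxa i]
  obtain ⟨Cb, hCb⟩ := (hcomp.image (continuous_apply j)).bddAbove
  set t : ℝ := max 0 ((Cb + 1 - x₀ j) / x j) with ht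
  have h1 : (x₀ + t • x) j ≤ Cb := hCb ⟨x₀ + t • x, hmem t (le_max_left _ _), rfl⟩
  have h2 : (Cb + 1 - x₀ j) / x j ≤ t := le_max_right _ _
  have h3 : Cb + 1 - x₀ j ≤ t * x j := by
    rw [div_le_iff₀ hj] at h2; linarith
  simp only [Pi.add_apply, Pi.smul_apply, smul_eq_mul] at h1
  linarith

lemma dom_all {n : ℕ} {I : Type*} (a : I → (Fin n → ℝ)) (β : I → ℝ)
    (hne : ({x : Fin n → ℝ | (∀ j, 0 ≤ x j) ∧
      ∀ i, ∑ j, a i j * x j ≤ β i}).Nonempty)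
    (hcomp : IsCompact {x : Fin n → ℝ | (∀ j, 0 ≤ x j) ∧
      ∀ i, ∑ j, a i j * x j ≤ β i})
    (u : Fin n → ℝ) :
    ∃ y : I →₀ ℝ, (∀ i, 0 ≤ y i) ∧ ∀ j, u j ≤ y.sum fun i yi => yi * a i j := by
  classical
  set C : Set (Fin n → ℝ) :=
    {u | ∃ y : I →₀ ℝ, (∀ i, 0 ≤ y i) ∧ ∀ j, u j ≤ y.sum fun i yi => yi * a i j} with hC
  have h0 : (0 : Fin n → ℝ) ∈ C := ⟨0, fun i => le_refl 0, fun j => by simp⟩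
  have hadd : ∀ p ∈ C, ∀ q ∈ C, p + q ∈ C := by
    rintro p ⟨y₁, hy₁0, hy₁⟩ q ⟨y₂, hy₂0, hy₂⟩
    refine ⟨y₁ + y₂, fun i => by
      simp only [Finsupp.add_apply]; exact add_nonneg (hy₁0 i) (hy₂0 i), fun j => ?_⟩
    rw [fs_sum_add y₁ y₂ (fun i => a i j)]
    exact add_le_add (hy₁ j) (hy₂ j)
  have hsmul : ∀ t : ℝ, 0 ≤ t → ∀ p ∈ C, t • p ∈ C := by
    rintro t ht p ⟨y₁, hy₁0, hy₁⟩
    refine ⟨t • y₁, fun i => by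
      simp only [Finsupp.smul_apply, smul_eq_mul]; exact mul_nonneg ht (hy₁0 i), fun j => ?_⟩
    rw [fs_sum_smul t y₁ (fun i => a i j)]
    simpa using mul_le_mul_of_nonneg_left (hy₁ j) ht
  have hconv : Convex ℝ C := fun p hp q hq s t hs ht _ =>
    hadd _ (hsmul s hs p hp) _ (hsmul t ht q hq)
  have hdense : ∀ v : Fin n → ℝ, v ∈ closure C := by
    intro v
    by_contra hv
    obtain ⟨f, r, hfr, hrv⟩ :=
      geometric_hahn_banach_closed_point hconv.closure isClosed_closure hv
    have hr0 : 0 < r := by simpa using hfr 0 (subset_closure h0)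
    have hfC : ∀ p ∈ C, f p ≤ 0 := by
      intro p hp
      by_contra h
      push_neg at h
      have ht : (0:ℝ) ≤ r / f p + 1 := by positivity
      have := hfr _ (subset_closure (hsmul _ ht p hp))
      rw [map_smul, smul_eq_mul] at this
      rw [add_mul, div_mul_cancel₀ _ (ne_of_gt h)] at this
      linarith
    set x : Fin n → ℝ := fun j => f (Pi.single j 1) with hxdef
    have hrep : ∀ w : Fin n → ℝ, f w = ∑ j, w j * x j := by
      intro w
      have hw : w = ∑ j, w j • (Pi.single j 1 : Fin n → ℝ) := by
        funext j'
        rw [Finset.sum_apply]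
        simp [Pi.single_apply]
      conv_lhs => rw [hw]
      rw [map_sum]
      exact Finset.sum_congr rfl fun j _ => by rw [map_smul, smul_eq_mul]
    have hx0 : ∀ j, 0 ≤ x j := by
      intro j
      have hmem : (-(Pi.single j 1) : Fin n → ℝ) ∈ C :=
        ⟨0, fun i => le_refl 0, fun j' => by
          simp [Pi.single_apply]; split <;> norm_num⟩
      have := hfC _ hmem
      rw [map_neg] at this
      linarith
    have hxa : ∀ i, ∑ j, a i j * x j ≤ 0 := by
      intro i
      have hmem : a i ∈ C := ⟨Finsupp.single i 1, fun i' => by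
        simp [Finsupp.single_apply]; split <;> norm_num,
        fun j => by rw [fs_sum_single i (fun i => a i j)]⟩
      have := hfC _ hmem
      rwa [hrep] at this
    have hx : x = 0 := rec_zero a β hne hcomp x hx0 hxa
    rw [hrep, hx] at hrv
    simp at hrv
    linarith
  have h1 : (u + 1 : Fin n → ℝ) ∈ closure C := hdense _
  rw [Metric.mem_closure_iff] at h1
  obtain ⟨w, hw, hdist⟩ := h1 1 one_pos
  obtain ⟨y, hy0, hy⟩ := hw
  refine ⟨y, hy0, fun j => le_trans ?_ (hy j)⟩
  have := dist_le_pi_dist (u + 1) w j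
  rw [Real.dist_eq] at this
  have : |u j + 1 - w j| < 1 := by
    simpa using lt_of_le_of_lt this hdist
  have := abs_lt.mp this
  linarith

/-- strong duality over compact convex sets: If
`S = {x ≥ 0 : a_iᵀx ≤ β_i ∀i ∈ I}` is nonempty and compact, then for every
`c ∈ ℝⁿ` the maximum of `cᵀx` over `S` equals the infimum of `∑_i y_i β_i`
over all finitely supported `y : I → ℝ₊` with `∑_i y_i a_i ≥ c`
coordinatewise; in particular the dual problem is feasible. -/
theorem strong_duality_compact {n : ℕ} {I : Type*}
    (a : I → (Fin n → ℝ)) (β : I → ℝ)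
    (hne : ({x : Fin n → ℝ | (∀ j, 0 ≤ x j) ∧
      ∀ i, ∑ j, a i j * x j ≤ β i}).Nonempty)
    (hcomp : IsCompact {x : Fin n → ℝ | (∀ j, 0 ≤ x j) ∧
      ∀ i, ∑ j, a i j * x j ≤ β i})
    (c : Fin n → ℝ) :
    ({v : ℝ | ∃ y : I →₀ ℝ, (∀ i, 0 ≤ y i) ∧
        (∀ j, c j ≤ y.sum fun i yi => yi * a i j) ∧
        v = y.sum fun i yi => yi * β i}).Nonempty ∧
    IsGreatest ((fun x => ∑ j, c j * x j) ''
        {x : Fin n → ℝ | (∀ j, 0 ≤ x j) ∧ ∀ i, ∑ j, a i j * x j ≤ β i})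
      (sInf {v : ℝ | ∃ y : I →₀ ℝ, (∀ i, 0 ≤ y i) ∧
        (∀ j, c j ≤ y.sum fun i yi => yi * a i j) ∧
        v = y.sum fun i yi => yi * β i}) := by
  classical
  set S : Set (Fin n → ℝ) := {x : Fin n → ℝ | (∀ j, 0 ≤ x j) ∧
      ∀ i, ∑ j, a i j * x j ≤ β i} with hSdef
  set D : Set ℝ := {v : ℝ | ∃ y : I →₀ ℝ, (∀ i, 0 ≤ y i) ∧
        (∀ j, c j ≤ y.sum fun i yi => yi * a i j) ∧
        v = y.sum fun i yi => yi * β i} with hDdef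
  have hcont : ContinuousOn (fun x : Fin n → ℝ => ∑ j, c j * x j) S :=
    (continuous_finset_sum _ fun j _ => continuous_const.mul (continuous_apply j)).continuousOn
  obtain ⟨x₀, hx₀, hmax⟩ := hcomp.exists_isMaxOn hne hcont
  set M : ℝ := ∑ j, c j * x₀ j with hMdef
  -- weak duality
  have weak : ∀ v ∈ D, M ≤ v := by
    rintro v ⟨y, hy0, hyf, rfl⟩
    have step1 : M ≤ ∑ j, (y.sum fun i yi => yi * a i j) * x₀ j :=
      Finset.sum_le_sum fun j _ => mul_le_mul_of_nonneg_right (hyf j) (hx₀.1 j)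
    have step2 : ∑ j, (y.sum fun i yi => yi * a i j) * x₀ j
        = ∑ i ∈ y.support, y i * ∑ j, a i j * x₀ j := by
      simp only [Finsupp.sum, Finset.sum_mul]
      rw [Finset.sum_comm]
      exact Finset.sum_congr rfl fun i _ => by
        rw [Finset.mul_sum]; exact Finset.sum_congr rfl fun j _ => by ring
    have step3 : ∑ i ∈ y.support, y i * ∑ j, a i j * x₀ j
        ≤ ∑ i ∈ y.support, y i * β i :=
      Finset.sum_le_sum fun i _ => mul_le_mul_of_nonneg_left (hx₀.2 i) (hy0 i)
    calc M ≤ _ := step1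
      _ = _ := step2
      _ ≤ _ := step3
      _ = y.sum fun i yi => yi * β i := rfl
  -- the dominating vector for 𝟙
  obtain ⟨yh, hyh0, hyh⟩ := dom_all a β hne hcomp (fun _ => 1)
  set B : ℝ := yh.sum fun i yi => yi * β i with hBdef
  -- key approximation
  have key : ∀ ε : ℝ, 0 < ε → ∃ v ∈ D, v ≤ M + ε := by
    intro ε hε
    set K : Set ((Fin n → ℝ) × ℝ) :=
      {p | ∃ y : I →₀ ℝ, (∀ i, 0 ≤ y i) ∧
        (∀ j, p.1 j ≤ y.sum fun i yi => yi * a i j) ∧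
        (y.sum fun i yi => yi * β i) ≤ p.2} with hKdef
    have h0K : ((0 : Fin n → ℝ), (0:ℝ)) ∈ K :=
      ⟨0, fun i => le_refl 0, fun j => by simp, by simp⟩
    have haddK : ∀ p ∈ K, ∀ q ∈ K, p + q ∈ K := by
      rintro p ⟨y₁, hy₁0, hy₁, hv₁⟩ q ⟨y₂, hy₂0, hy₂, hv₂⟩
      refine ⟨y₁ + y₂, fun i => by
        simp only [Finsupp.add_apply]; exact add_nonneg (hy₁0 i) (hy₂0 i),
        fun j => ?_, ?_⟩
      · rw [fs_sum_add y₁ y₂ (fun i => a i j)]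
        exact add_le_add (hy₁ j) (hy₂ j)
      · rw [fs_sum_add y₁ y₂ β]
        exact add_le_add hv₁ hv₂
    have hsmulK : ∀ t : ℝ, 0 ≤ t → ∀ p ∈ K, t • p ∈ K := by
      rintro t ht p ⟨y₁, hy₁0, hy₁, hv₁⟩
      refine ⟨t • y₁, fun i => by
        simp only [Finsupp.smul_apply, smul_eq_mul]; exact mul_nonneg ht (hy₁0 i),
        fun j => ?_, ?_⟩
      · rw [fs_sum_smul t y₁ (fun i => a i j)]
        simpa using mul_le_mul_of_nonneg_left (hy₁ j) ht
      · rw [fs_sum_smul t y₁ β]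
        simpa using mul_le_mul_of_nonneg_left hv₁ ht
    have hconvK : Convex ℝ K := fun p hp q hq s t hs ht _ =>
      haddK _ (hsmulK s hs p hp) _ (hsmulK t ht q hq)
    have hcl : ((c, M + ε/2) : (Fin n → ℝ) × ℝ) ∈ closure K := by
      by_contra hv
      obtain ⟨f, r, hfr, hrv⟩ :=
        geometric_hahn_banach_closed_point hconvK.closure isClosed_closure hv
      have hr0 : 0 < r := by simpa using hfr 0 (subset_closure h0K)
      have hfK : ∀ p ∈ K, f p ≤ 0 := by
        intro p hp
        by_contra h
        push_neg at h
        have ht : (0:ℝ) ≤ r / f p + 1 := by positivity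
        have := hfr _ (subset_closure (hsmulK _ ht p hp))
        rw [map_smul, smul_eq_mul] at this
        rw [add_mul, div_mul_cancel₀ _ (ne_of_gt h)] at this
        linarith
      set x : Fin n → ℝ := fun j => f ((Pi.single j 1 : Fin n → ℝ), (0:ℝ)) with hxdef
      set lam : ℝ := f ((0 : Fin n → ℝ), (1:ℝ)) with hlamdef
      have hrep : ∀ w : Fin n → ℝ, ∀ s : ℝ, f (w, s) = (∑ j, w j * x j) + s * lam := by
        intro w s
        have hw : ((w, s) : (Fin n → ℝ) × ℝ)
            = (∑ j, w j • ((Pi.single j 1 : Fin n → ℝ), (0:ℝ)))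
              + s • ((0 : Fin n → ℝ), (1:ℝ)) := by
          apply Prod.ext
          · simp only [Prod.fst_add, Prod.fst_sum, Prod.smul_fst, Prod.snd_add]
            funext j'
            rw [Pi.add_apply, Finset.sum_apply]
            simp [Pi.single_apply]
          · simp [Prod.snd_sum]
        conv_lhs => rw [hw]
        rw [map_add, map_sum, map_smul, smul_eq_mul]
        congr 1
        exact Finset.sum_congr rfl fun j _ => by rw [map_smul, smul_eq_mul]
      have hlam : lam ≤ 0 := hfK _ ⟨0, fun i => le_refl 0, fun j => by simp, by simp⟩
      have hx0 : ∀ j, 0 ≤ x j := by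
        intro j
        have hmem : ((-(Pi.single j 1) : Fin n → ℝ), (0:ℝ)) ∈ K :=
          ⟨0, fun i => le_refl 0, fun j' => by
            simp [Pi.single_apply]; split <;> norm_num, by simp⟩
        have h1 := hfK _ hmem
        have h2 : ((-(Pi.single j 1) : Fin n → ℝ), (0:ℝ))
            = -((Pi.single j 1 : Fin n → ℝ), (0:ℝ)) := by
          rw [Prod.neg_mk, neg_zero]
        rw [h2, map_neg] at h1
        linarith
      have hxa : ∀ i, (∑ j, a i j * x j) + β i * lam ≤ 0 := by
        intro i
        have hmem : ((a i, β i) : (Fin n → ℝ) × ℝ) ∈ K :=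
          ⟨Finsupp.single i 1, fun i' => by
            simp [Finsupp.single_apply]; split <;> norm_num,
            fun j => le_of_eq (fs_sum_single i (fun i => a i j)).symm,
            le_of_eq (fs_sum_single i β)⟩
        have := hfK _ hmem
        rwa [hrep] at this
      have hpos : 0 < (∑ j, c j * x j) + (M + ε/2) * lam := by
        have := hrv
        rw [hrep] at this
        linarith
      rcases lt_or_eq_of_le hlam with hlt | heq
      · -- lam < 0 : x / (-lam) is feasible with value > M
        set μ : ℝ := -lam with hμ
        have hμ0 : 0 < μ := by simp [hμ]; linarith
        set x' : Fin n → ℝ := fun j => x j / μ with hx'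
        have hx'S : x' ∈ S := by
          refine ⟨fun j => div_nonneg (hx0 j) hμ0.le, fun i => ?_⟩
          have hsum : ∑ j, a i j * x' j = (∑ j, a i j * x j) / μ := by
            rw [Finset.sum_div]
            exact Finset.sum_congr rfl fun j _ => by rw [hx']; ring
          rw [hsum, div_le_iff₀ hμ0]
          have h' : β i * μ = -(β i * lam) := by rw [hμ]; ring
          linarith [hxa i]
        have hle : ∑ j, c j * x' j ≤ M := hmax hx'S
        have hsum : ∑ j, c j * x' j = (∑ j, c j * x j) / μ := by
          rw [Finset.sum_div]
          exact Finset.sum_congr rfl fun j _ => by rw [hx']; ring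
        rw [hsum, div_le_iff₀ hμ0] at hle
        have e1 : (M + ε/2) * μ = -((M + ε/2) * lam) := by rw [hμ]; ring
        have e2 : (M + ε/2) * μ < ∑ j, c j * x j := by linarith
        have e3 : (M + ε/2) * μ = M * μ + (ε/2) * μ := by ring
        have e4 : 0 < (ε/2) * μ := mul_pos (half_pos hε) hμ0
        have e5 : (M + ε/2) * μ < M * μ := lt_of_lt_of_le e2 hle
        rw [e3] at e5
        linarith [e4, e5]
      · -- lam = 0 : recession direction
        have hx : x = 0 := by
          refine rec_zero a β hne hcomp x hx0 fun i => ?_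
          have h := hxa i
          rw [heq] at h
          simpa using h
        rw [hx, heq] at hpos
        simp at hpos
    -- extract an approximating point
    rw [Metric.mem_closure_iff] at hcl
    set δ : ℝ := (ε/4) / (1 + |B|) with hδ
    have hB1 : 0 < 1 + |B| := by positivity
    have hδ0 : 0 < δ := by positivity
    obtain ⟨p, hpK, hdist⟩ := hcl δ hδ0
    obtain ⟨y₁, hy₁0, hy₁, hv₁⟩ := hpK
    have hd1 : ∀ j, c j - p.1 j < δ := by
      intro j
      have h1 : dist (c j) (p.1 j) ≤ dist c p.1 := dist_le_pi_dist c p.1 j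
      have h2 : dist c p.1 ≤ dist ((c, M + ε/2) : (Fin n → ℝ) × ℝ) p := le_max_left _ _
      rw [Prod.dist_eq] at hdist
      have h3 : dist (c j) (p.1 j) < δ := lt_of_le_of_lt (h1.trans (le_max_left _ _)) hdist
      rw [Real.dist_eq] at h3
      have := abs_lt.mp h3
      linarith [this.2]
    have hd2 : p.2 - (M + ε/2) < δ := by
      rw [Prod.dist_eq] at hdist
      have h3 : dist (M + ε/2) p.2 < δ := lt_of_le_of_lt (le_max_right _ _) hdist
      rw [Real.dist_eq] at h3
      have := abs_lt.mp h3
      linarith [this.2]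
    set y : I →₀ ℝ := y₁ + δ • yh with hy
    have hy0 : ∀ i, 0 ≤ y i := fun i => by
      simp only [hy, Finsupp.add_apply, Finsupp.smul_apply, smul_eq_mul]
      exact add_nonneg (hy₁0 i) (mul_nonneg hδ0.le (hyh0 i))
    have hyfeas : ∀ j, c j ≤ y.sum fun i yi => yi * a i j := by
      intro j
      rw [hy, fs_sum_add y₁ (δ • yh) (fun i => a i j), fs_sum_smul δ yh (fun i => a i j)]
      have h1 : (1:ℝ) ≤ yh.sum fun i yi => yi * a i j := hyh j
      have h2 := hy₁ j
      have h3 := hd1 j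
      nlinarith
    have hval : (y.sum fun i yi => yi * β i) ≤ M + ε := by
      rw [hy, fs_sum_add y₁ (δ • yh) β, fs_sum_smul δ yh β]
      have h4 : δ * B ≤ δ * |B| := mul_le_mul_of_nonneg_left (le_abs_self B) hδ0.le
      have h5 : δ * (1 + |B|) = ε/4 := by
        rw [hδ, div_mul_cancel₀ _ (ne_of_gt hB1)]
      nlinarith
    exact ⟨_, ⟨y, hy0, hyfeas, rfl⟩, hval⟩
  -- assembly
  have Dne : D.Nonempty := by
    obtain ⟨v, hv, _⟩ := key 1 one_pos
    exact ⟨v, hv⟩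
  have hbdd : BddBelow D := ⟨M, weak⟩
  have hinf : sInf D = M := by
    refine le_antisymm ?_ (le_csInf Dne weak)
    refine le_of_forall_pos_le_add fun ε hε => ?_
    obtain ⟨v, hv, hvle⟩ := key ε hε
    exact (csInf_le hbdd hv).trans hvle
  refine ⟨Dne, ?_, ?_⟩
  · rw [hinf]
    exact ⟨x₀, hx₀, rfl⟩
  · rintro v ⟨x, hx, rfl⟩
    rw [hinf]
    exact hmax hx
end
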